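/- Let σ ∈ (3/4, 1), ξ₁ ∈ (0, 1 − σ) and χ ∈ (0, (1 − σ)/2). For s > 0 let χ₁(s) be the smallest even integer ≥ s(1 − s^{−χ}), let χ₂(s) be the largest odd integer ≤ s(1 + s^{−χ}), and set K(s) := {l ∈ ℕ : χ₁(s) ≤ l ≤ χ₂(s)}. Then for every θ > 0: lim_{t→∞} t^{θ} e^{t^{σ}} Σ_{l ∈ ℕ₀, l ∉ K(t − 2 t^{ξ₁})} e^{−(t − 2 t^{ξ₁})} (t − 2 t^{ξ₁})^l / l! = 0. (Superpolynomial Poisson concentration; Claim 6.5 / the claim used in the proof of Lemma 5.3, Part 3.) -/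

import Mathlib

/-!
Exponential Markov (Chernoff) bound for the Poisson law: tilting by `e^{hl}` turns the weights of
`Poisson(s)` into `e^{s(e^h - 1)}` times those of `Poisson(s e^h)`, so the mass of `l ≥ a` (resp.
`l ≤ a`) is at most `exp (s(e^h - 1) - ha)` for `h ≥ 0` (resp. `h ≤ 0`). With `δ = s^{-χ}` and
`h = ±δ/4` the mass outside `[s(1 - δ/2), s(1 + δ/2)]` is at most `2 exp (-s δ² / 16)`, and this
interval lies in the window `K(s)` as soon as `s δ ≥ 2`. For `s = t - 2t^{ξ₁} ≥ t/2` the bound is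
`2 exp (-c t^{1-2χ})`, which beats `t^θ e^{t^σ}` because `σ < 1 - 2χ`.
-/

open scoped BigOperators

noncomputable section

/-- The smallest even integer `≥ a`. -/
def evenCeil (a : ℝ) : ℤ := 2 * ⌈a / 2⌉

/-- The largest odd integer `≤ a`. -/
def oddFloor (a : ℝ) : ℤ := 2 * ⌊(a - 1) / 2⌋ + 1

/-- The window `K(s) = {l ∈ ℕ : χ₁(s) ≤ l ≤ χ₂(s)}`, where `χ₁(s)` is the smallest even
integer `≥ s(1 − s^{−χ})` and `χ₂(s)` is the largest odd integer `≤ s(1 + s^{−χ})`. -/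
def Kwin (χ s : ℝ) : Set ℕ :=
  {l : ℕ | evenCeil (s * (1 - s ^ (-χ))) ≤ (l : ℤ) ∧ (l : ℤ) ≤ oddFloor (s * (1 + s ^ (-χ)))}

open Filter Real Topology

-- Mathlib's `ProbabilityTheory.poissonPMFReal` needs `s : ℝ≥0`; here `s` is real so that it can be
-- `t - 2 t^{ξ₁}` itself.
def poissonWeight (s : ℝ) (l : ℕ) : ℝ := exp (-s) * s ^ l / l.factorial

lemma poissonWeight_nonneg {s : ℝ} (hs : 0 ≤ s) (l : ℕ) : 0 ≤ poissonWeight s l := by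
  unfold poissonWeight; positivity

lemma summable_poissonWeight (s : ℝ) : Summable (poissonWeight s) :=
  ((summable_pow_div_factorial s).mul_left (exp (-s))).congr fun _ => (mul_div_assoc ..).symm

lemma tsum_poissonWeight (s : ℝ) : ∑' l, poissonWeight s l = 1 := by
  have hexp : ∑' l : ℕ, s ^ l / l.factorial = exp s := by
    rw [exp_eq_exp_ℝ, NormedSpace.exp_eq_tsum_div]
  simp only [poissonWeight, mul_div_assoc]
  rw [tsum_mul_left, hexp, ← exp_add, neg_add_cancel, exp_zero]

lemma poissonWeight_mul_exp (s h : ℝ) (l : ℕ) :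
    poissonWeight s l * exp (h * l) = exp (s * (exp h - 1)) * poissonWeight (s * exp h) l := by
  have hsplit : exp (-s) = exp (s * (exp h - 1)) * exp (-(s * exp h)) := by
    rw [← exp_add]; ring_nf
  simp only [poissonWeight, mul_pow, ← exp_nat_mul, hsplit]
  ring_nf

lemma tsum_indicator_poissonWeight_le {s h a : ℝ} (hs : 0 ≤ s) {S : Set ℕ}
    (hS : ∀ l ∈ S, h * a ≤ h * l) :
    ∑' l, S.indicator (poissonWeight s) l ≤ exp (s * (exp h - 1) - h * a) := by
  have hle : ∀ l, S.indicator (poissonWeight s) l ≤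
      poissonWeight s l * exp (h * l) * exp (-(h * a)) := by
    intro l
    by_cases hl : l ∈ S
    · rw [Set.indicator_of_mem hl, mul_assoc, ← exp_add]
      exact le_mul_of_one_le_right (poissonWeight_nonneg hs l)
        (one_le_exp (by linarith [hS l hl]))
    · rw [Set.indicator_of_notMem hl]
      have := poissonWeight_nonneg hs l
      positivity
  have hsum : Summable fun l => poissonWeight s l * exp (h * l) := by
    simpa only [poissonWeight_mul_exp] using (summable_poissonWeight _).mul_left _
  calc ∑' l, S.indicator (poissonWeight s) l
      ≤ ∑' l, poissonWeight s l * exp (h * l) * exp (-(h * a)) :=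
        ((summable_poissonWeight s).indicator S).tsum_le_tsum hle (hsum.mul_right _)
    _ = exp (s * (exp h - 1) - h * a) := by
        simp only [poissonWeight_mul_exp, tsum_mul_right, tsum_mul_left, tsum_poissonWeight,
          mul_one, ← exp_add, sub_eq_add_neg]

lemma exp_sub_one_le_add_sq {x : ℝ} (hx : |x| ≤ 1) : exp x - 1 ≤ x + x ^ 2 := by
  linarith [(abs_le.mp (abs_exp_sub_one_sub_id_le hx)).2]

lemma tsum_indicator_poissonWeight_upper_le {s δ : ℝ} (hs : 0 ≤ s) (hδ : 0 ≤ δ) (hδ4 : δ ≤ 4) :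
    ∑' l, {l : ℕ | s * (1 + δ / 2) ≤ l}.indicator (poissonWeight s) l ≤
      exp (-(s * δ ^ 2) / 16) := by
  refine (tsum_indicator_poissonWeight_le (h := δ / 4) hs
    fun l hl => mul_le_mul_of_nonneg_left hl (by positivity)).trans (exp_le_exp.mpr ?_)
  have := exp_sub_one_le_add_sq (x := δ / 4) (by rw [abs_of_nonneg (by positivity)]; linarith)
  nlinarith [mul_le_mul_of_nonneg_left this hs]

lemma tsum_indicator_poissonWeight_lower_le {s δ : ℝ} (hs : 0 ≤ s) (hδ : 0 ≤ δ) (hδ4 : δ ≤ 4) :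
    ∑' l, {l : ℕ | l ≤ s * (1 - δ / 2)}.indicator (poissonWeight s) l ≤
      exp (-(s * δ ^ 2) / 16) := by
  refine (tsum_indicator_poissonWeight_le (h := -(δ / 4)) hs
    fun l hl => mul_le_mul_of_nonpos_left hl (by linarith)).trans (exp_le_exp.mpr ?_)
  have := exp_sub_one_le_add_sq (x := -(δ / 4))
    (by rw [abs_neg, abs_of_nonneg (by positivity)]; linarith)
  nlinarith [mul_le_mul_of_nonneg_left this hs]

lemma tsum_indicator_poissonWeight_le_of_far {s δ : ℝ} (hs : 0 ≤ s) (hδ : 0 ≤ δ) (hδ4 : δ ≤ 4)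
    {S : Set ℕ} (hS : ∀ l ∈ S, (l : ℝ) ≤ s * (1 - δ / 2) ∨ s * (1 + δ / 2) ≤ l) :
    ∑' l, S.indicator (poissonWeight s) l ≤ 2 * exp (-(s * δ ^ 2) / 16) := by
  set A := {l : ℕ | l ≤ s * (1 - δ / 2)}
  set B := {l : ℕ | s * (1 + δ / 2) ≤ l}
  have hsum := summable_poissonWeight s
  have hle : ∀ l, S.indicator (poissonWeight s) l ≤
      A.indicator (poissonWeight s) l + B.indicator (poissonWeight s) l := by
    intro l
    have hA := Set.indicator_nonneg (fun l _ => poissonWeight_nonneg hs l) (s := A) l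
    have hB := Set.indicator_nonneg (fun l _ => poissonWeight_nonneg hs l) (s := B) l
    by_cases hl : l ∈ S
    · rw [Set.indicator_of_mem hl]
      rcases hS l hl with hlA | hlB
      · rw [Set.indicator_of_mem (show l ∈ A from hlA)]; linarith
      · rw [Set.indicator_of_mem (show l ∈ B from hlB)]; linarith
    · rw [Set.indicator_of_notMem hl]; positivity
  calc ∑' l, S.indicator (poissonWeight s) l
      ≤ ∑' l, (A.indicator (poissonWeight s) l + B.indicator (poissonWeight s) l) :=
        (hsum.indicator S).tsum_le_tsum hle ((hsum.indicator A).add (hsum.indicator B))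
    _ ≤ exp (-(s * δ ^ 2) / 16) + exp (-(s * δ ^ 2) / 16) := by
        rw [(hsum.indicator A).tsum_add (hsum.indicator B)]
        exact add_le_add (tsum_indicator_poissonWeight_lower_le hs hδ hδ4)
          (tsum_indicator_poissonWeight_upper_le hs hδ hδ4)
    _ = 2 * exp (-(s * δ ^ 2) / 16) := by ring

lemma evenCeil_lt_add_two (a : ℝ) : (evenCeil a : ℝ) < a + 2 := by
  have := Int.ceil_lt_add_one (a / 2)
  rw [evenCeil]; push_cast; linarith

lemma sub_two_lt_oddFloor (a : ℝ) : a - 2 < (oddFloor a : ℝ) := by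
  have := Int.sub_one_lt_floor ((a - 1) / 2)
  rw [oddFloor]; push_cast; linarith

lemma far_of_notMem_Kwin {χ s : ℝ} (hgap : 2 ≤ s * s ^ (-χ)) {l : ℕ} (hl : l ∉ Kwin χ s) :
    (l : ℝ) ≤ s * (1 - s ^ (-χ) / 2) ∨ s * (1 + s ^ (-χ) / 2) ≤ l := by
  simp only [Kwin, Set.mem_ofPred_eq, not_and_or, not_le] at hl
  rcases hl with hlt | hlt
  · have : (l : ℝ) + 1 ≤ evenCeil (s * (1 - s ^ (-χ))) := by exact_mod_cast hlt
    have := evenCeil_lt_add_two (s * (1 - s ^ (-χ)))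
    left; nlinarith
  · have : (oddFloor (s * (1 + s ^ (-χ))) : ℝ) + 1 ≤ l := by exact_mod_cast hlt
    have := sub_two_lt_oddFloor (s * (1 + s ^ (-χ)))
    right; nlinarith

lemma tsum_compl_Kwin_poissonWeight_le {χ s : ℝ} (hχ : 0 ≤ χ) (hs : 1 ≤ s)
    (hgap : 2 ≤ s ^ (1 - χ)) :
    ∑' l : {l : ℕ // l ∉ Kwin χ s}, poissonWeight s l ≤ 2 * exp (-s ^ (1 - 2 * χ) / 16) := by
  have hs0 : 0 < s := by linarith
  have hδ : s ^ (-χ) ≤ 1 := rpow_le_one_of_one_le_of_nonpos hs (by linarith)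
  have hsδ : s * s ^ (-χ) = s ^ (1 - χ) := by
    rw [sub_eq_add_neg, rpow_add hs0, rpow_one]
  have hsδ2 : s * (s ^ (-χ)) ^ 2 = s ^ (1 - 2 * χ) := by
    rw [← rpow_natCast, ← rpow_mul hs0.le, sub_eq_add_neg, rpow_add hs0, rpow_one]
    ring_nf
  refine (tsum_subtype (Kwin χ s)ᶜ (poissonWeight s)).trans_le ?_
  rw [← hsδ2]
  exact tsum_indicator_poissonWeight_le_of_far hs0.le (by positivity) (by linarith)
    fun l hl => far_of_notMem_Kwin (hsδ ▸ hgap) hl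

lemma eventually_half_le_sub_rpow {ξ : ℝ} (hξ : ξ < 1) :
    ∀ᶠ t : ℝ in atTop, t / 2 ≤ t - 2 * t ^ ξ := by
  have hsmall : ∀ᶠ t : ℝ in atTop, t ^ (ξ - 1) ≤ 1 / 4 := by
    have := tendsto_rpow_neg_atTop (y := 1 - ξ) (by linarith)
    rw [neg_sub] at this
    exact this.eventually_le_const (by norm_num)
  filter_upwards [hsmall, eventually_gt_atTop 0] with t hsmall ht
  have : t ^ ξ = t ^ (ξ - 1) * t := by rw [rpow_sub ht, rpow_one, div_mul_cancel₀ _ ht.ne']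
  nlinarith

lemma tendsto_rpow_mul_exp_rpow_mul_exp_neg_rpow {θ σ η c : ℝ} (hη : 0 < η) (hση : σ < η)
    (hc : 0 < c) :
    Tendsto (fun t => t ^ θ * exp (t ^ σ) * exp (-(c * t ^ η))) atTop (𝓝 0) := by
  have hratio :
      Tendsto (fun t => θ * (log t / t ^ η) + t ^ (σ - η) - c) atTop (𝓝 (θ * 0 + 0 - c)) :=
    (((isLittleO_log_rpow_atTop hη).tendsto_div_nhds_zero.const_mul θ).add
      (by simpa only [neg_sub] using tendsto_rpow_neg_atTop (sub_pos.mpr hση))).sub_const c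
  have hexponent : Tendsto (fun t => t ^ η * (θ * (log t / t ^ η) + t ^ (σ - η) - c)) atTop atBot :=
    (tendsto_rpow_atTop hη).atTop_mul_neg (by linarith) hratio
  refine (tendsto_exp_atBot.comp hexponent).congr' ?_
  filter_upwards [eventually_gt_atTop 0] with t ht
  have hη_pos : 0 < t ^ η := rpow_pos_of_pos ht η
  have hσ_split : t ^ η * t ^ (σ - η) = t ^ σ := by rw [← rpow_add ht, add_sub_cancel]
  rw [Function.comp_apply, rpow_def_of_pos ht θ, ← exp_add, ← exp_add]
  congr 1
  rw [mul_sub, mul_add, ← mul_assoc, mul_comm _ θ, mul_assoc, mul_div_cancel₀ _ hη_pos.ne',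
    hσ_split]
  ring

theorem stmt16_general (σ ξ₁ χ : ℝ) (hσ0 : 3 / 4 < σ)
    (hξ1 : ξ₁ < 1 - σ) (hχ0 : 0 < χ) (hχ1 : χ < (1 - σ) / 2)
    (θ : ℝ) :
    Filter.Tendsto
      (fun t : ℝ => t ^ θ * Real.exp (t ^ σ) *
        ∑' l : {l : ℕ // l ∉ Kwin χ (t - 2 * t ^ ξ₁)},
          Real.exp (-(t - 2 * t ^ ξ₁)) * (t - 2 * t ^ ξ₁) ^ (l : ℕ) /
            (((l : ℕ).factorial : ℝ)))
      Filter.atTop (nhds 0) := by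
  set η := 1 - 2 * χ
  have hη : 0 < η := by linarith
  have half_le := eventually_half_le_sub_rpow (ξ := ξ₁) (by linarith)
  have hs_top : Tendsto (fun t : ℝ => t - 2 * t ^ ξ₁) atTop atTop :=
    tendsto_atTop_mono' _ half_le (tendsto_id.atTop_div_const two_pos)
  have gap := ((tendsto_rpow_atTop (y := 1 - χ) (by linarith)).comp hs_top).eventually_ge_atTop 2
  have hlim := (tendsto_rpow_mul_exp_rpow_mul_exp_neg_rpow (θ := θ) (σ := σ) hη (by linarith)
    (by positivity : 0 < ((2 : ℝ) ^ η)⁻¹ / 16)).const_mul 2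
  rw [mul_zero] at hlim
  refine squeeze_zero' ?_ ?_ hlim
  · filter_upwards [eventually_ge_atTop 0, hs_top.eventually_ge_atTop 0] with t ht hs
    exact mul_nonneg (by positivity) (tsum_nonneg fun l => poissonWeight_nonneg hs l)
  · filter_upwards [eventually_ge_atTop 0, half_le, hs_top.eventually_ge_atTop 1, gap]
      with t ht hhalf hs hgap
    have hcomp : ((2 : ℝ) ^ η)⁻¹ / 16 * t ^ η ≤ (t - 2 * t ^ ξ₁) ^ η / 16 := by
      have := rpow_le_rpow (by positivity) hhalf hη.le
      rw [div_rpow ht zero_le_two, div_eq_inv_mul] at this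
      linarith
    calc _ ≤ t ^ θ * exp (t ^ σ) * (2 * exp (-(t - 2 * t ^ ξ₁) ^ η / 16)) :=
          mul_le_mul_of_nonneg_left (tsum_compl_Kwin_poissonWeight_le hχ0.le hs hgap)
            (by positivity)
      _ ≤ 2 * (t ^ θ * exp (t ^ σ) * exp (-(((2 : ℝ) ^ η)⁻¹ / 16 * t ^ η))) := by
          rw [mul_left_comm]
          gcongr
          linarith

/-- Superpolynomial Poisson concentration: for every `θ > 0`,
`t^θ e^{t^σ} Σ_{l ∉ K(t − 2t^{ξ₁})} e^{−(t−2t^{ξ₁})} (t−2t^{ξ₁})^l / l! → 0` as `t → ∞`. -/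
theorem stmt16 (σ ξ₁ χ : ℝ) (hσ0 : 3 / 4 < σ) (hσ1 : σ < 1)
    (hξ0 : 0 < ξ₁) (hξ1 : ξ₁ < 1 - σ) (hχ0 : 0 < χ) (hχ1 : χ < (1 - σ) / 2)
    (θ : ℝ) (hθ : 0 < θ) :
    Filter.Tendsto
      (fun t : ℝ => t ^ θ * Real.exp (t ^ σ) *
        ∑' l : {l : ℕ // l ∉ Kwin χ (t - 2 * t ^ ξ₁)},
          Real.exp (-(t - 2 * t ^ ξ₁)) * (t - 2 * t ^ ξ₁) ^ (l : ℕ) /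
            (((l : ℕ).factorial : ℝ)))
      Filter.atTop (nhds 0) :=
  stmt16_general σ ξ₁ χ hσ0 hξ1 hχ0 hχ1 θ
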